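/- Let 𝒜 = (A₂, A₁, δ) be a braided regular crossed module with group of objects A₀ (identity e), and let K = {a ∈ A₁ : β(a) = e} with group operation a·b = b + (a.α(b)). Then the formula c!a = (c.α(a))^a, for c ∈ A₂(e) and a ∈ K, defines a right action of the group K on the group A₂(e) by group automorphisms extending the action of A₁(e) ⊆ K; the restriction δ : A₂(e) → K is K-equivariant; for all c, c' ∈ A₂(e) one has c!δ(c') = -c' + c + c'; and hence δ : A₂(e) → K is a crossed module of groups. -/

import Mathlib

/-!
The operation `!` is the right action of `A₀` on `A₂(e)` followed by the crossed-module
action of `A₁`, so the action law and the automorphism property come from the action laws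
`(c.u).v = c.(uv)`, `(c^a).v = (c.v)^(a.v)` and from `(a+b).v = a.v + b.v`. For
equivariance, `δ(c ! a) = -a + δ(c).(αa) + a` by equivariance of `δ`, while in `K` the
product `a⁻¹ · δc · a` unfolds to the same arrow once `(a.(αa)⁻¹).(αa) = a` is used.
On `A₁(e)` the operation `!` is the crossed-module action, which gives the Peiffer identity.
-/

open CategoryTheory

/-- A crossed module of groupoids `(A₂, A₁, δ)` over the object type `X`.
The groupoid `A₁` is encoded by a `Groupoid` structure on `X` (composition `a ≫ b`
corresponding to the additive composition `a + b` of the paper). -/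
structure XMod (X : Type*) [Groupoid X] where
  /-- the family of groups `A₂ x` -/
  C : X → Type*
  grp : ∀ x : X, Group (C x)
  /-- the right action `c ^ a` of `A₁` on `A₂` -/
  act : ∀ {x y : X}, C x → (x ⟶ y) → C y
  act_mul : ∀ {x y : X} (c c' : C x) (a : x ⟶ y), act (c * c') a = act c a * act c' a
  act_comp : ∀ {x y z : X} (c : C x) (a : x ⟶ y) (b : y ⟶ z), act c (a ≫ b) = act (act c a) b
  act_id : ∀ {x : X} (c : C x), act c (𝟙 x) = c
  /-- the boundary `δ : A₂ x → A₁(x,x)` -/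
  δ : ∀ {x : X}, C x → (x ⟶ x)
  δ_mul : ∀ {x : X} (c c' : C x), δ (c * c') = δ c ≫ δ c'
  δ_act : ∀ {x y : X} (c : C x) (a : x ⟶ y), δ (act c a) = Groupoid.inv a ≫ δ c ≫ a
  peiffer : ∀ {x : X} (c c' : C x), act c (δ c') = c'⁻¹ * c * c'

attribute [instance] XMod.grp

/-- A braided regular crossed module `𝒜 = (A₂, A₁, δ)`: a crossed module of
groupoids whose object set `A₀ = X` is a group (identity `e = 1`), together with
commuting left and right actions of `A₀` on `A₁` and on `A₂` (written `p.a`, `a.p`,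
`p.c`, `c.p`; here `sL p a`, `sR a p`, `sL₂ p c`, `sR₂ c p`) by groupoid
automorphisms, compatible with `δ` and the crossed-module action, and a braiding
`{a, b} ∈ A₂ ((β a) * (β b))`.  The canonical identifications of objects coming from
the group laws of `A₀` are implemented by `eqToHom` (on `A₂` by transporting along
the identity arrow `𝒞.act _ (eqToHom _)`). -/
structure Braided (X : Type*) [Groupoid X] [Group X] (𝒞 : XMod X) where
  sL : ∀ (p : X) {x y : X}, (x ⟶ y) → ((p * x) ⟶ (p * y))
  sR : ∀ {x y : X}, (x ⟶ y) → ∀ p : X, ((x * p) ⟶ (y * p))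
  sL₂ : ∀ (p : X) {x : X}, 𝒞.C x → 𝒞.C (p * x)
  sR₂ : ∀ {x : X}, 𝒞.C x → ∀ p : X, 𝒞.C (x * p)
  -- the actions are actions of the group `A₀`:
  sL_one : ∀ (x y : X) (a : x ⟶ y),
    sL 1 a = eqToHom (one_mul x) ≫ a ≫ eqToHom (one_mul y).symm
  sL_mul : ∀ (p q x y : X) (a : x ⟶ y),
    sL (p * q) a = eqToHom (mul_assoc p q x) ≫ sL p (sL q a) ≫ eqToHom (mul_assoc p q y).symm
  sR_one : ∀ (x y : X) (a : x ⟶ y),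
    sR a 1 = eqToHom (mul_one x) ≫ a ≫ eqToHom (mul_one y).symm
  sR_mul : ∀ (p q x y : X) (a : x ⟶ y),
    sR a (p * q) = eqToHom (mul_assoc x p q).symm ≫ sR (sR a p) q ≫ eqToHom (mul_assoc y p q)
  sL₂_one : ∀ (x : X) (c : 𝒞.C x), sL₂ 1 c = 𝒞.act c (eqToHom (one_mul x).symm)
  sL₂_mulA : ∀ (p q x : X) (c : 𝒞.C x),
    sL₂ (p * q) c = 𝒞.act (sL₂ p (sL₂ q c)) (eqToHom (mul_assoc p q x).symm)
  sR₂_one : ∀ (x : X) (c : 𝒞.C x), sR₂ c 1 = 𝒞.act c (eqToHom (mul_one x).symm)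
  sR₂_mulA : ∀ (p q x : X) (c : 𝒞.C x),
    sR₂ c (p * q) = 𝒞.act (sR₂ (sR₂ c p) q) (eqToHom (mul_assoc x p q))
  -- the left and right actions commute:
  sLR : ∀ (p q x y : X) (a : x ⟶ y),
    sR (sL p a) q = eqToHom (mul_assoc p x q) ≫ sL p (sR a q) ≫ eqToHom (mul_assoc p y q).symm
  sLR₂ : ∀ (p q x : X) (c : 𝒞.C x),
    sR₂ (sL₂ p c) q = 𝒞.act (sL₂ p (sR₂ c q)) (eqToHom (mul_assoc p x q).symm)
  -- each element of `A₀` acts by automorphisms of the groupoid `A₁` and of `A₂`: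
  sL_comp : ∀ (p x y z : X) (a : x ⟶ y) (b : y ⟶ z), sL p (a ≫ b) = sL p a ≫ sL p b
  sL_id : ∀ (p x : X), sL p (𝟙 x) = 𝟙 (p * x)
  sR_comp : ∀ (p x y z : X) (a : x ⟶ y) (b : y ⟶ z), sR (a ≫ b) p = sR a p ≫ sR b p
  sR_id : ∀ (p x : X), sR (𝟙 x) p = 𝟙 (x * p)
  sL₂_mul : ∀ (p x : X) (c c' : 𝒞.C x), sL₂ p (c * c') = sL₂ p c * sL₂ p c'
  sR₂_mul : ∀ (p x : X) (c c' : 𝒞.C x), sR₂ (c * c') p = sR₂ c p * sR₂ c' p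
  -- the boundary `δ` is equivariant:
  δ_sL : ∀ (p x : X) (c : 𝒞.C x), 𝒞.δ (sL₂ p c) = sL p (𝒞.δ c)
  δ_sR : ∀ (p x : X) (c : 𝒞.C x), 𝒞.δ (sR₂ c p) = sR (𝒞.δ c) p
  -- compatibility with the crossed-module action:  `z.(c^a) = (z.c)^(z.a)`, `(c^a).z = (c.z)^(a.z)`:
  sL₂_act : ∀ (p x y : X) (c : 𝒞.C x) (a : x ⟶ y),
    sL₂ p (𝒞.act c a) = 𝒞.act (sL₂ p c) (sL p a)
  sR₂_act : ∀ (p x y : X) (c : 𝒞.C x) (a : x ⟶ y),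
    sR₂ (𝒞.act c a) p = 𝒞.act (sR₂ c p) (sR a p)
  /-- the braiding `{a, b} ∈ A₂ ((β a) * (β b))` -/
  brd : ∀ {x x' y y' : X}, (x ⟶ x') → (y ⟶ y') → 𝒞.C (x' * y')
  brd_one_left : ∀ (y y' : X) (b : y ⟶ y'), brd (𝟙 (1 : X)) b = 1
  brd_one_right : ∀ (x x' : X) (a : x ⟶ x'), brd a (𝟙 (1 : X)) = 1
  -- `{a, b + b'} = {a, b} ^ (β a . b') + {a, b'}`:
  brd_add_right : ∀ (x x' y y' y'' : X) (a : x ⟶ x') (b : y ⟶ y') (b' : y' ⟶ y''),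
    brd a (b ≫ b') = 𝒞.act (brd a b) (sL x' b') * brd a b'
  -- `{a + a', b} = {a', b} + {a, b} ^ (a' . β b)`:
  brd_add_left : ∀ (x x' x'' y y' : X) (a : x ⟶ x') (a' : x' ⟶ x'') (b : y ⟶ y'),
    brd (a ≫ a') b = brd a' b * 𝒞.act (brd a b) (sR a' y')
  -- `δ {a, b} = -(β a . b) - (a . α b) + (α a . b) + (a . β b)`:
  brd_δ : ∀ (x x' y y' : X) (a : x ⟶ x') (b : y ⟶ y'),
    𝒞.δ (brd a b) =
      Groupoid.inv (sL x' b) ≫ Groupoid.inv (sR a y) ≫ sL x b ≫ sR a y'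
  -- `{a, δ c'} = -(β a . c') + (α a . c') ^ (a . y)` for `c' ∈ A₂ y`:
  brd_δ_right : ∀ (x x' y : X) (a : x ⟶ x') (c' : 𝒞.C y),
    brd a (𝒞.δ c') = (sL₂ x' c')⁻¹ * 𝒞.act (sL₂ x c') (sR a y)
  -- `{δ c, b} = -(c . α b) ^ (x . b) + c . β b` for `c ∈ A₂ x`:
  brd_δ_left : ∀ (x y y' : X) (c : 𝒞.C x) (b : y ⟶ y'),
    brd (𝒞.δ c) b = (𝒞.act (sR₂ c y) (sL x b))⁻¹ * sR₂ c y'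
  -- `p.{a, b} = {p.a, b}`, `{a, b}.p = {a, b.p}`, `{a.p, b} = {a, p.b}`:
  brd_sL : ∀ (p x x' y y' : X) (a : x ⟶ x') (b : y ⟶ y'),
    sL₂ p (brd a b) = 𝒞.act (brd (sL p a) b) (eqToHom (mul_assoc p x' y'))
  brd_sR : ∀ (p x x' y y' : X) (a : x ⟶ x') (b : y ⟶ y'),
    sR₂ (brd a b) p = 𝒞.act (brd a (sR b p)) (eqToHom (mul_assoc x' y' p).symm)
  brd_mid : ∀ (p x x' y y' : X) (a : x ⟶ x') (b : y ⟶ y'),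
    brd (sR a p) b = 𝒞.act (brd a (sL p b)) (eqToHom (mul_assoc x' p y').symm)

namespace Braided

variable {X : Type*} [Groupoid X] [Group X] {𝒞 : XMod X}

/-- the costar `K = {a ∈ A₁ : β a = e}` of `A₁` at the identity `e = 1` of `A₀`:
an element is an arrow `a : u ⟶ 1` together with its source `u = α a`. -/
def K (X : Type*) [Groupoid X] [Group X] : Type _ :=
  Σ u : X, (u ⟶ (1 : X))

/-- the group operation of `K`: the composite (in the composable order) of
`a . (α b)` and `b`; its source is `(α a) * (α b)`, so that `α : K → A₀` is a
homomorphism. -/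
def Kop (B : Braided X 𝒞) (k k' : K X) : K X :=
  ⟨k.1 * k'.1, B.sR k.2 k'.1 ≫ eqToHom (one_mul k'.1) ≫ k'.2⟩

/-- the identity `1_e` of `K`. -/
def Kone (X : Type*) [Groupoid X] [Group X] : K X :=
  ⟨1, 𝟙 (1 : X)⟩

/-- the inverse of `k` in the group `K`. -/
def Kinv (B : Braided X 𝒞) (k : K X) : K X :=
  ⟨k.1⁻¹, eqToHom (one_mul k.1⁻¹).symm ≫ Groupoid.inv (B.sR k.2 k.1⁻¹) ≫
    eqToHom (mul_inv_cancel k.1)⟩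

/-- the diagonal (conjugation) action `k ^ p = p⁻¹ . k . p` of `A₀` on `K`. -/
def Kconj (B : Braided X 𝒞) (k : K X) (p : X) : K X :=
  ⟨p⁻¹ * k.1 * p, eqToHom (mul_assoc p⁻¹ k.1 p) ≫ B.sL p⁻¹ (B.sR k.2 p) ≫
    eqToHom (show p⁻¹ * ((1 : X) * p) = 1 by simp)⟩

/-- the diagonal (conjugation) action `c ^ p = p⁻¹ . c . p` of `A₀` on the
vertex group `A₂(e)`. -/
def Cconj (B : Braided X 𝒞) (c : 𝒞.C (1 : X)) (p : X) : 𝒞.C (1 : X) :=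
  𝒞.act (B.sL₂ p⁻¹ (B.sR₂ c p)) (eqToHom (show p⁻¹ * ((1 : X) * p) = 1 by simp))

/-- the action `c ! a = (c . α a) ^ a` of `K` on the vertex group `A₂(e)`. -/
def bang (B : Braided X 𝒞) (c : 𝒞.C (1 : X)) (k : K X) : 𝒞.C (1 : X) :=
  𝒞.act (B.sR₂ c k.1) (eqToHom (one_mul k.1) ≫ k.2)

/-- the inclusion of the vertex group `A₁(e)` into `K`. -/
def iota (a : (1 : X) ⟶ (1 : X)) : K X := ⟨1, a⟩

end Braided

open Braided

theorem XMod.act_eqToHom_self {X : Type*} [Groupoid X] (𝒞 : XMod X) {x : X} (h : x = x)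
    (c : 𝒞.C x) : 𝒞.act c (eqToHom h) = c := by
  rw [eqToHom_refl, 𝒞.act_id]

namespace Braided

variable {X : Type*} [Groupoid X] [Group X] {𝒞 : XMod X} (B : Braided X 𝒞)

theorem sR_eqToHom {x y : X} (h : x = y) (p : X) :
    B.sR (eqToHom h) p = eqToHom (congrArg (· * p) h) := by
  subst h; exact B.sR_id p x

theorem sR_inv {x y : X} (a : x ⟶ y) (p : X) : B.sR (inv a) p = inv (B.sR a p) := by
  refine IsIso.eq_inv_of_hom_inv_id ?_
  rw [← B.sR_comp, IsIso.hom_inv_id, B.sR_id]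

theorem sR_sR {x y : X} (a : x ⟶ y) {p q r : X} (h : p * q = r) :
    B.sR (B.sR a p) q = eqToHom (by rw [mul_assoc, h]) ≫ B.sR a r ≫
      eqToHom (by rw [mul_assoc, h]) := by
  subst h
  simp only [B.sR_mul, Category.assoc, eqToHom_trans, eqToHom_trans_assoc, eqToHom_refl,
    Category.id_comp, Category.comp_id]

theorem sR_sR_inv_self {x y : X} (a : x ⟶ y) (p : X) :
    B.sR (B.sR a p⁻¹) p = eqToHom (inv_mul_cancel_right x p) ≫ a ≫
      eqToHom (inv_mul_cancel_right y p).symm := by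
  rw [B.sR_sR a (inv_mul_cancel p), B.sR_one]
  simp only [eqToHom_trans_assoc, Category.assoc, eqToHom_trans]

theorem K_ext {u v : X} {a : u ⟶ 1} {b : v ⟶ 1} (h : u = v) (hab : a = eqToHom h ≫ b) :
    (⟨u, a⟩ : K X) = ⟨v, b⟩ := by
  subst h; rw [hab, eqToHom_refl, Category.id_comp]

-- With `k = ⟨u, a⟩` the transports in `bang`, `Kop`, `Kinv` are along equations between
-- `u`, `1 * u`, … rather than `k.1`, so that `simp` can merge consecutive `eqToHom`s.
theorem bang_mk (c : 𝒞.C 1) {u : X} (a : u ⟶ 1) :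
    B.bang c ⟨u, a⟩ = 𝒞.act (B.sR₂ c u) (eqToHom (one_mul u) ≫ a) := rfl

theorem Kop_mk {u v : X} (a : u ⟶ 1) (b : v ⟶ 1) :
    B.Kop ⟨u, a⟩ ⟨v, b⟩ = ⟨u * v, B.sR a v ≫ eqToHom (one_mul v) ≫ b⟩ := rfl

theorem Kinv_mk {u : X} (a : u ⟶ 1) :
    B.Kinv ⟨u, a⟩ = ⟨u⁻¹, eqToHom (one_mul u⁻¹).symm ≫ inv (B.sR a u⁻¹) ≫
      eqToHom (mul_inv_cancel u)⟩ := by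
  rw [← Groupoid.inv_eq_inv]; rfl

theorem Kinv_mul_iota_mul (d : (1 : X) ⟶ 1) {u : X} (a : u ⟶ 1) :
    B.Kop (B.Kop (B.Kinv ⟨u, a⟩) (iota d)) ⟨u, a⟩ =
      iota (inv (eqToHom (one_mul u) ≫ a) ≫ B.sR d u ≫ eqToHom (one_mul u) ≫ a) := by
  simp only [Kinv_mk, iota, Kop_mk]
  refine K_ext (by group) ?_
  simp only [B.sR_comp, sR_eqToHom, sR_inv, B.sR_one, sR_sR_inv_self, IsIso.inv_comp,
    inv_eqToHom, Category.assoc, eqToHom_trans, eqToHom_trans_assoc]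

theorem bang_Kone (c : 𝒞.C 1) : B.bang c (Kone X) = c := by
  simp only [Kone, bang_mk, B.sR₂_one, ← 𝒞.act_comp, Category.comp_id, eqToHom_trans]
  exact 𝒞.act_eqToHom_self _ c

theorem bang_Kop (c : 𝒞.C 1) (k k' : K X) :
    B.bang c (B.Kop k k') = B.bang (B.bang c k) k' := by
  obtain ⟨u, a⟩ := k
  obtain ⟨v, b⟩ := k'
  simp only [Kop_mk, bang_mk, B.sR₂_mulA, B.sR₂_act, ← 𝒞.act_comp, B.sR_comp, sR_eqToHom,
    eqToHom_trans_assoc, Category.assoc]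

theorem bang_mul (c c' : 𝒞.C 1) (k : K X) : B.bang (c * c') k = B.bang c k * B.bang c' k := by
  simp only [bang, B.sR₂_mul, 𝒞.act_mul]

theorem bang_iota (c : 𝒞.C 1) (a : (1 : X) ⟶ 1) : B.bang c (iota a) = 𝒞.act c a := by
  simp only [iota, bang_mk, B.sR₂_one, ← 𝒞.act_comp, eqToHom_trans_assoc, eqToHom_refl,
    Category.id_comp]

theorem iota_δ_bang (c : 𝒞.C 1) (k : K X) :
    iota (𝒞.δ (B.bang c k)) = B.Kop (B.Kop (B.Kinv k) (iota (𝒞.δ c))) k := by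
  obtain ⟨u, a⟩ := k
  rw [Kinv_mul_iota_mul, bang_mk, 𝒞.δ_act, B.δ_sR, Groupoid.inv_eq_inv]

theorem bang_iota_δ (c c' : 𝒞.C 1) : B.bang c (iota (𝒞.δ c')) = c'⁻¹ * c * c' := by
  rw [bang_iota, 𝒞.peiffer]

end Braided

/-- **Statement 16.** Let `𝒜` be a braided regular crossed module, `K` the costar at
`e` with the group operation of Statement 15.  Then `c ! a = (c . α a) ^ a`
(`c ∈ A₂(e)`, `a ∈ K`) defines a right action of the group `K` on the group `A₂(e)`
by group automorphisms, extending the action of the vertex group `A₁(e) ⊆ K`; the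
restriction `δ : A₂(e) → K` is `K`-equivariant (for the conjugation action of `K` on
itself); `c ! δ c' = - c' + c + c'`; hence `δ : A₂(e) → K` is a crossed module of
groups. -/
theorem bang_crossedModule {X : Type*} [Groupoid X] [Group X] {𝒞 : XMod X}
    (B : Braided X 𝒞) :
    -- `!` is a right action of the group `K` on `A₂(e)` …
    (∀ c : 𝒞.C (1 : X), B.bang c (Kone X) = c) ∧
    (∀ (c : 𝒞.C (1 : X)) (k k' : K X), B.bang c (B.Kop k k') = B.bang (B.bang c k) k') ∧
    -- … by group automorphisms:
    (∀ (c c' : 𝒞.C (1 : X)) (k : K X), B.bang (c * c') k = B.bang c k * B.bang c' k) ∧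
    -- it extends the crossed-module action of the vertex group `A₁(e) ⊆ K`:
    (∀ (c : 𝒞.C (1 : X)) (a : (1 : X) ⟶ (1 : X)), B.bang c ⟨1, a⟩ = 𝒞.act c a) ∧
    -- `δ : A₂(e) → K` is `K`-equivariant:  `δ (c ! k) = k⁻¹ · (δ c) · k` in `K`:
    (∀ (c : 𝒞.C (1 : X)) (k : K X),
      iota (𝒞.δ (B.bang c k)) = B.Kop (B.Kop (B.Kinv k) (iota (𝒞.δ c))) k) ∧
    -- the Peiffer identity `c ! (δ c') = - c' + c + c'`:
    (∀ c c' : 𝒞.C (1 : X), B.bang c (iota (𝒞.δ c')) = c'⁻¹ * c * c') :=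
  ⟨B.bang_Kone, B.bang_Kop, B.bang_mul, B.bang_iota, B.iota_δ_bang, B.bang_iota_δ⟩
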